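/- For every natural number M ≥ 1 and every nonzero complex number z, (1/2)(z + 1/z)^{4M+2} − (1/2)(z − 1/z)^{4M+2} = ∑_{k=0}^{M} 2^{4k} ((4M+2)/(2k+1)) C(M+k, 2k) (z² − 1/z²)^{2(M−k)}. -/

import Mathlib

/-!
Put `x = (z + 1/z)^2` and `y = (z - 1/z)^2`, so that `x - y = 4` and `x y = (z^2 - 1/z^2)^2`.
The left-hand side is `(x^(2M+1) - y^(2M+1)) / 2`, and the theorem is the expansion of
`(x^(2M+1) - y^(2M+1)) / (x - y)` as a polynomial in `(x - y)^2` and `x y`, valid in every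
commutative ring. Both sides of that expansion satisfy the recurrence
`u (M+2) = (x^2 + y^2) u (M+1) - x^2 y^2 u M`; for the polynomial side this comes down to
the second-difference identity `Δ² C(n, k+2) = C(n, k)` for binomial coefficients.
-/

open Finset

namespace Nat

theorem choose_add_two_add_choose (n k : ℕ) :
    (n + 2).choose (k + 2) + n.choose (k + 2) = 2 * (n + 1).choose (k + 2) + n.choose k := by
  have h₁ : (n + 2).choose (k + 2) = (n + 1).choose (k + 1) + (n + 1).choose (k + 2) :=
    choose_succ_succ' (n + 1) (k + 1)
  have h₂ : (n + 1).choose (k + 2) = n.choose (k + 1) + n.choose (k + 2) :=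
    choose_succ_succ' n (k + 1)
  have h₃ : (n + 1).choose (k + 1) = n.choose k + n.choose (k + 1) := choose_succ_succ' n k
  omega

end Nat

/-- `oddCoeff M k = (2M+1)/(2k+1) * C(M+k, 2k)`, see `oddCoeff_mul`. -/
def oddCoeff (M k : ℕ) : ℕ :=
  (M + k + 1).choose (2 * k + 1) + (M + k).choose (2 * k + 1)

theorem oddCoeff_eq_zero_of_lt {M k : ℕ} (h : M < k) : oddCoeff M k = 0 := by
  rw [oddCoeff, Nat.choose_eq_zero_of_lt (by omega), Nat.choose_eq_zero_of_lt (by omega)]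

theorem oddCoeff_zero_right (M : ℕ) : oddCoeff M 0 = 2 * M + 1 := by
  simp only [oddCoeff, mul_zero, zero_add, add_zero, Nat.choose_one_right]
  omega

theorem oddCoeff_add_two_add_one (M k : ℕ) :
    oddCoeff (M + 2) (k + 1) + oddCoeff M (k + 1) =
      2 * oddCoeff (M + 1) (k + 1) + oddCoeff (M + 1) k := by
  simp only [oddCoeff, show 2 * (k + 1) + 1 = 2 * k + 1 + 2 by ring]
  rw [show M + 2 + (k + 1) + 1 = M + k + 4 by omega, show M + 2 + (k + 1) = M + k + 3 by omega,
    show M + (k + 1) + 1 = M + k + 2 by omega, show M + (k + 1) = M + k + 1 by omega,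
    show M + 1 + (k + 1) + 1 = M + k + 3 by omega, show M + 1 + (k + 1) = M + k + 2 by omega,
    show M + 1 + k + 1 = M + k + 2 by omega, show M + 1 + k = M + k + 1 by omega]
  have h₁ : (M + k + 4).choose (2 * k + 1 + 2) + (M + k + 2).choose (2 * k + 1 + 2) =
      2 * (M + k + 3).choose (2 * k + 1 + 2) + (M + k + 2).choose (2 * k + 1) :=
    Nat.choose_add_two_add_choose (M + k + 2) (2 * k + 1)
  have h₂ : (M + k + 3).choose (2 * k + 1 + 2) + (M + k + 1).choose (2 * k + 1 + 2) =
      2 * (M + k + 2).choose (2 * k + 1 + 2) + (M + k + 1).choose (2 * k + 1) :=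
    Nat.choose_add_two_add_choose (M + k + 1) (2 * k + 1)
  omega

theorem oddCoeff_mul (M k : ℕ) :
    (2 * k + 1) * oddCoeff M k = (2 * M + 1) * (M + k).choose (2 * k) := by
  rcases lt_or_ge M k with h | h
  · rw [oddCoeff_eq_zero_of_lt h, Nat.choose_eq_zero_of_lt (by omega)]
    simp
  obtain ⟨j, rfl⟩ := Nat.exists_eq_add_of_le h
  have h₁ := Nat.add_one_mul_choose_eq (k + j + k) (2 * k)
  have h₂ := Nat.choose_succ_right_eq (k + j + k) (2 * k)
  rw [show k + j + k - 2 * k = j by omega] at h₂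
  simp only [oddCoeff]
  nlinarith

section OddLucas

variable {R : Type*} [CommRing R]

/-- `oddLucas ((x - y)^2) (x * y) M = (x^(2M+1) - y^(2M+1)) / (x - y)`, see `sub_mul_oddLucas`. -/
def oddLucas (D p : R) (M : ℕ) : R :=
  ∑ k ∈ range (M + 1), (oddCoeff M k : R) * D ^ k * p ^ (M - k)

theorem pow_mul_oddLucas (D p : R) {M j n N : ℕ} (hn : M + j = n) (hN : M + 1 ≤ N) :
    p ^ j * oddLucas D p M = ∑ k ∈ range N, (oddCoeff M k : R) * D ^ k * p ^ (n - k) := by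
  rw [oddLucas, mul_sum, ← sum_subset (range_subset_range.mpr hN)]
  · refine sum_congr rfl fun k _ => ?_
    rcases le_or_gt k M with h | h
    · rw [show n - k = (M - k) + j by omega, pow_add]
      ring
    · simp [oddCoeff_eq_zero_of_lt h]
  · intro k _ hk
    rw [oddCoeff_eq_zero_of_lt (by simp at hk; omega)]
    simp

theorem oddLucas_add_two (D p : R) (M : ℕ) :
    oddLucas D p (M + 2) = (D + 2 * p) * oddLucas D p (M + 1) - p ^ 2 * oddLucas D p M := by
  have h₂ := pow_mul_oddLucas D p (j := 0) (n := M + 2) (N := M + 3) rfl (by omega)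
  rw [pow_zero, one_mul] at h₂
  have h₁ := pow_mul_oddLucas D p (j := 1) (n := M + 2) (N := M + 3) rfl (by omega)
  have h₀ := pow_mul_oddLucas D p (j := 2) (n := M + 2) (N := M + 3) rfl (by omega)
  have hD : D * oddLucas D p (M + 1) =
      ∑ k ∈ range (M + 2), (oddCoeff (M + 1) k : R) * D ^ (k + 1) * p ^ (M + 2 - (k + 1)) := by
    rw [oddLucas, mul_sum]
    refine sum_congr rfl fun k _ => ?_
    rw [show M + 2 - (k + 1) = M + 1 - k by omega]
    ring
  have hrec (k : ℕ) : (oddCoeff (M + 2) (k + 1) : R) - 2 * oddCoeff (M + 1) (k + 1)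
      + oddCoeff M (k + 1) = oddCoeff (M + 1) k := by
    have := congrArg (Nat.cast : ℕ → R) (oddCoeff_add_two_add_one M k)
    push_cast at this
    linear_combination this
  have hzero : (oddCoeff (M + 2) 0 : R) - 2 * oddCoeff (M + 1) 0 + oddCoeff M 0 = 0 := by
    simp only [oddCoeff_zero_right]
    push_cast
    ring
  have hsum : oddLucas D p (M + 2) - 2 * (p ^ 1 * oddLucas D p (M + 1))
      + p ^ 2 * oddLucas D p M = D * oddLucas D p (M + 1) := by
    rw [h₂, h₁, h₀, hD, mul_sum, ← sum_sub_distrib, ← sum_add_distrib]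
    have hterm (k : ℕ) : (oddCoeff (M + 2) k : R) * D ^ k * p ^ (M + 2 - k)
        - 2 * ((oddCoeff (M + 1) k : R) * D ^ k * p ^ (M + 2 - k))
        + (oddCoeff M k : R) * D ^ k * p ^ (M + 2 - k)
        = ((oddCoeff (M + 2) k : R) - 2 * oddCoeff (M + 1) k + oddCoeff M k)
          * D ^ k * p ^ (M + 2 - k) := by
      ring
    simp only [hterm, sum_range_succ', hrec, hzero, zero_mul, add_zero]
  linear_combination hsum

theorem sub_mul_oddLucas (x y : R) (M : ℕ) :
    (x - y) * oddLucas ((x - y) ^ 2) (x * y) M = x ^ (2 * M + 1) - y ^ (2 * M + 1) := by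
  induction M using Nat.twoStepInduction with
  | zero => simp only [oddLucas, oddCoeff]; norm_num
  | one =>
    simp only [oddLucas, sum_range_succ, sum_range_zero, oddCoeff]
    norm_num
    ring
  | more M ih₀ ih₁ =>
    rw [oddLucas_add_two]
    linear_combination (x ^ 2 + y ^ 2) * ih₁ - x ^ 2 * y ^ 2 * ih₀

end OddLucas

theorem stmt_4 (M : ℕ) (z : ℂ) (hz : z ≠ 0) :
    (1 / 2) * (z + 1 / z) ^ (4 * M + 2) - (1 / 2) * (z - 1 / z) ^ (4 * M + 2)
    = ∑ k ∈ Finset.range (M + 1),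
        2 ^ (4 * k) * ((4 * M + 2 : ℂ) / (2 * k + 1)) * ((M + k).choose (2 * k)) *
          (z ^ 2 - 1 / z ^ 2) ^ (2 * (M - k)) := by
  have hsub : (z + 1 / z) ^ 2 - (z - 1 / z) ^ 2 = 4 := by
    field_simp
    ring
  have hmul : (z + 1 / z) ^ 2 * (z - 1 / z) ^ 2 = (z ^ 2 - 1 / z ^ 2) ^ 2 := by ring
  have key := sub_mul_oddLucas ((z + 1 / z) ^ 2) ((z - 1 / z) ^ 2) M
  rw [hsub, hmul, ← pow_mul, ← pow_mul, show 2 * (2 * M + 1) = 4 * M + 2 by ring] at key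
  rw [← mul_sub, ← key, oddLucas, mul_sum, mul_sum]
  generalize z ^ 2 - 1 / z ^ 2 = w
  refine sum_congr rfl fun k _ => ?_
  have hcoeff : (2 * k + 1 : ℂ) * oddCoeff M k = (2 * M + 1) * (M + k).choose (2 * k) := by
    exact_mod_cast oddCoeff_mul M k
  rw [← pow_mul, ← pow_mul, show (4 : ℂ) ^ (2 * k) = 2 ^ (4 * k) by rw [pow_mul, pow_mul]; norm_num]
  have h2k : (2 * k + 1 : ℂ) ≠ 0 := by exact_mod_cast (2 * k).succ_ne_zero
  field_simp
  linear_combination 4 * w ^ (2 * (M - k)) * hcoeff
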